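/- arXiv:2312.16779 — 2 statements merged into one kernel-verified Lean document; each statement's English description precedes it below -/
import Mathlib

section
/- Let N > 2 be an integer, f : ℝ → ℝ continuous, and let u be a C² solution of u''(r) + ((N−1)/r) u'(r) + f(u(r)) = 0 on (0,∞). Then there are no radii 0 < r₁ < r₂ with u(r₁) = u(r₂), u'(r₁)/r₁ = u'(r₂)/r₂ and u'(r₁) ≠ 0. (Equivalently: the plane curve r ↦ (u(r), −u'(r)/r) has no self-intersections away from points where u' vanishes.) -/
open Set

/-- The plane curve `r ↦ (u(r), -u'(r)/r)` has no self-intersections away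
from points where `u'` vanishes. -/
theorem stmt_6 (N : ℕ) (hN : 2 < N) (f : ℝ → ℝ) (hf : Continuous f)
    (u : ℝ → ℝ) (hu : ContDiffOn ℝ 2 u (Ioi 0))
    (hode : ∀ r ∈ Ioi (0:ℝ),
      deriv (deriv u) r + (((N : ℝ) - 1) / r) * deriv u r + f (u r) = 0) :
    ¬ ∃ r₁ r₂ : ℝ, 0 < r₁ ∧ r₁ < r₂ ∧ u r₁ = u r₂ ∧
        deriv u r₁ / r₁ = deriv u r₂ / r₂ ∧ deriv u r₁ ≠ 0 := by
  rintro ⟨r₁, r₂, hr₁, hr₁₂, huu, hdd, hne⟩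
  have hr₂ : 0 < r₂ := hr₁.trans hr₁₂
  -- antiderivative of f
  set G : ℝ → ℝ := fun x => ∫ t in (0:ℝ)..x, f t with hGdef
  have hGd : ∀ x : ℝ, HasDerivAt G (f x) x := by
    intro x
    exact intervalIntegral.integral_hasDerivAt_right
      (hf.intervalIntegrable _ _)
      (hf.stronglyMeasurableAtFilter _ _) hf.continuousAt
  -- the energy
  set E : ℝ → ℝ := fun r => deriv u r * deriv u r / 2 + G (u r) with hEdef
  have hNpos : (0:ℝ) ≤ (N:ℝ) - 1 := by
    have : (2:ℝ) < N := by exact_mod_cast hN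
    linarith
  have hder : ∀ r ∈ Ioi (0:ℝ),
      HasDerivAt E (-(((N:ℝ) - 1) / r) * (deriv u r * deriv u r)) r := by
    intro r hr
    have hmem : Ioi (0:ℝ) ∈ nhds r := isOpen_Ioi.mem_nhds hr
    have h1 : HasDerivAt u (deriv u r) r :=
      ((hu.contDiffAt hmem).differentiableAt (by norm_num)).hasDerivAt
    have hud : ContDiffOn ℝ 1 (deriv u) (Ioi 0) :=
      hu.deriv_of_isOpen isOpen_Ioi (by norm_num)
    have h2 : HasDerivAt (deriv u) (deriv (deriv u) r) r :=
      ((hud.contDiffAt hmem).differentiableAt (by norm_num)).hasDerivAt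
    have h3 : HasDerivAt (fun s => G (u s)) (f (u r) * deriv u r) r :=
      (hGd (u r)).comp r h1
    have h4 : HasDerivAt (fun s => deriv u s * deriv u s / 2)
        ((deriv (deriv u) r * deriv u r + deriv u r * deriv (deriv u) r) / 2) r :=
      (h2.mul h2).div_const 2
    have h5 := h4.add h3
    have heq := hode r hr
    refine h5.congr_deriv ?_
    have : deriv (deriv u) r = -(((N:ℝ) - 1) / r) * deriv u r - f (u r) := by
      linarith
    rw [this]; ring
  have hcont : ContinuousOn E (Ioi 0) := fun x hx =>
    ((hder x hx).differentiableAt).continuousAt.continuousWithinAt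
  have hanti : AntitoneOn E (Ioi 0) := by
    apply antitoneOn_of_deriv_nonpos (convex_Ioi 0) hcont
    · intro x hx
      rw [interior_Ioi] at hx
      exact ((hder x hx).differentiableAt).differentiableWithinAt
    · intro x hx
      rw [interior_Ioi] at hx
      rw [(hder x hx).deriv]
      have h1 : 0 ≤ ((N:ℝ) - 1) / x := div_nonneg hNpos (le_of_lt hx)
      have h2 : 0 ≤ deriv u x * deriv u x := mul_self_nonneg _
      nlinarith
  have hE12 : E r₂ ≤ E r₁ := hanti (mem_Ioi.2 hr₁) (mem_Ioi.2 hr₂) hr₁₂.le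
  -- unfold the energy inequality
  have hkey : deriv u r₂ * deriv u r₂ ≤ deriv u r₁ * deriv u r₁ := by
    simp only [hEdef, huu] at hE12
    linarith
  -- but |u'(r₂)| = (r₂/r₁)|u'(r₁)| > |u'(r₁)|
  have hd2 : deriv u r₂ = deriv u r₁ * r₂ / r₁ := by
    field_simp at hdd
    field_simp
    linarith [hdd]
  rw [hd2] at hkey
  have h0 : 0 < deriv u r₁ * deriv u r₁ := mul_self_pos.2 hne
  have : deriv u r₁ * r₂ / r₁ * (deriv u r₁ * r₂ / r₁)
      = (deriv u r₁ * deriv u r₁) * ((r₂ / r₁) * (r₂ / r₁)) := by ring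
  rw [this] at hkey
  have hratio : 1 < r₂ / r₁ := (one_lt_div hr₁).2 hr₁₂
  have hq : 1 < (r₂ / r₁) * (r₂ / r₁) := by nlinarith
  nlinarith [mul_lt_mul_of_pos_left hq h0]
end

section
/- Let N > 2 be an integer and let f satisfy (H1) and (H2). Let u and v be solutions of u'' + ((N−1)/r)u' + f(u) = 0, each strictly decreasing along a branch of radii, with inverse functions r_u, r_v both defined on [β, s̄] for some s̄ > β, and with J, P defined from each inverse as in the context. Assume r_u(s̄) > r_v(s̄), J_u(s̄) > J_v(s̄), and P_u(s̄) < 0 ≤ P_v(s̄). Then r_u'(s) > r_v'(s) for all s ∈ [β, s̄] (there is no point of [β, s̄] where r_u' = r_v'), and moreover r_u(β)²·J_u(β) > r_v(β)²·J_v(β). -/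
open Set Filter Topology

/-- `F(s) = ∫₀^s f(t) dt`. -/
noncomputable def Fint (f : ℝ → ℝ) (s : ℝ) : ℝ := ∫ t in (0:ℝ)..s, f t

/-- Hypothesis (H1) on the nonlinearity `f`, with parameters `b` and `β`. -/
def H1 (f : ℝ → ℝ) (b β : ℝ) : Prop :=
  ContinuousOn f (Ici 0) ∧
  (∃ T : Finset ℝ, ∀ s : ℝ, 0 < s → s ∉ T → ContDiffAt ℝ 1 f s) ∧
  f 0 = 0 ∧ 0 ≤ b ∧ (∀ s, b < s → 0 < f s) ∧ (∀ s ∈ Icc 0 b, f s ≤ 0) ∧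
  (∃ ε₀ > (0:ℝ), ∀ s ∈ Ioo 0 ε₀, f s < 0) ∧ (∀ s, f (-s) = -f s) ∧
  b ≤ β ∧ Fint f β = 0 ∧ ∀ β', b ≤ β' → Fint f β' = 0 → β' = β

/-- Hypothesis (H2): subcriticality, `(F/f)'(s) > (N-2)/(2N)` for `s > β`. -/
def H2 (N : ℕ) (f : ℝ → ℝ) (β : ℝ) : Prop :=
  ∀ s, β < s → ((N : ℝ) - 2) / (2 * N) < deriv (fun t => Fint f t / f t) s

/-- A strictly decreasing branch of a radial solution of
`u'' + ((N-1)/r)u' + f(u) = 0`, recorded through the set `S` of values it takes,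
together with the inverse function `ρ` of `u` on that branch. -/
structure SolBranch (N : ℕ) (f : ℝ → ℝ) where
  S : Set ℝ
  u : ℝ → ℝ
  ρ : ℝ → ℝ
  pos : ∀ s ∈ S, 0 < ρ s
  smooth : ∀ s ∈ S, ContDiffAt ℝ 2 u (ρ s)
  ode : ∀ s ∈ S,
    deriv (deriv u) (ρ s) + (((N : ℝ) - 1) / ρ s) * deriv u (ρ s) + f (u (ρ s)) = 0
  dec : ∀ s ∈ S, deriv u (ρ s) < 0
  inv : ∀ s ∈ S, u (ρ s) = s
  invd : ∀ s ∈ S, HasDerivAt ρ (1 / deriv u (ρ s)) s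

/-- `J(s) = -1/(ρ(s)·ρ'(s))`. -/
noncomputable def SolBranch.J {N : ℕ} {f : ℝ → ℝ} (B : SolBranch N f) (s : ℝ) : ℝ :=
  -1 / (B.ρ s * deriv B.ρ s)

/-- The energy `I(s) = ρ(s)²J(s)²/2 + F(s)`. -/
noncomputable def SolBranch.I {N : ℕ} {f : ℝ → ℝ} (B : SolBranch N f) (s : ℝ) : ℝ :=
  (B.ρ s) ^ 2 * (B.J s) ^ 2 / 2 + Fint f s

/-- The Pohozaev functional
`P(s) = ρ(s)^N (2N(F/f)(s)J(s) - ρ(s)²J(s)² - 2F(s))`. -/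
noncomputable def SolBranch.P {N : ℕ} {f : ℝ → ℝ} (B : SolBranch N f) (s : ℝ) : ℝ :=
  (B.ρ s) ^ N *
    (2 * (N : ℝ) * (Fint f s / f s) * B.J s - (B.ρ s) ^ 2 * (B.J s) ^ 2 - 2 * Fint f s)

section Base

variable {f : ℝ → ℝ} {b β : ℝ}

lemma H1.bpos (h : H1 f b β) : 0 < b := by
  rcases h.2.2.2.1.lt_or_eq with hb | hb
  · exact hb
  · exfalso
    obtain ⟨ε₀, hε₀, hneg⟩ := h.2.2.2.2.2.2.1
    have h1 : 0 < f (ε₀/2) := h.2.2.2.2.1 _ (by rw [← hb]; positivity)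
    have h2 : f (ε₀/2) < 0 := hneg _ ⟨by positivity, by linarith⟩
    linarith

lemma H1.fcont (h : H1 f b β) {s : ℝ} (hs : 0 < s) : ContinuousAt f s :=
  h.1.continuousAt (Ici_mem_nhds hs)

lemma H1.fpos (h : H1 f b β) {s : ℝ} (hs : b < s) : 0 < f s := h.2.2.2.2.1 _ hs

lemma H1.fposβ (h : H1 f b β) {s : ℝ} (hs : β < s) : 0 < f s :=
  h.fpos (lt_of_le_of_lt h.2.2.2.2.2.2.2.2.1 hs)

lemma H1.βpos (h : H1 f b β) : 0 < β := lt_of_lt_of_le h.bpos h.2.2.2.2.2.2.2.2.1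

lemma H1.fnonnegβ (h : H1 f b β) {s : ℝ} (hs : β ≤ s) : 0 ≤ f s := by
  rcases lt_or_ge b s with hb | hb
  · exact (h.fpos hb).le
  · -- then s = b = β, f b = 0 by continuity
    have hβb : β = b := le_antisymm (hs.trans hb) h.2.2.2.2.2.2.2.2.1
    have hsb : s = b := le_antisymm hb (hβb ▸ hs)
    subst hsb
    -- f s ≥ 0 : limit from the right of positive values
    by_contra hneg
    push_neg at hneg
    have hc : ContinuousAt f s := h.fcont h.bpos
    have : ∀ᶠ x in 𝓝 s, f x < 0 := hc.eventually_lt_const hneg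
    obtain ⟨δ, hδ, hδ'⟩ := Metric.eventually_nhds_iff.1 this
    have h1 : 0 < f (s + δ/2) := h.fpos (by linarith)
    have h2 : f (s + δ/2) < 0 := hδ' (by simp [abs_of_pos]; rw [abs_of_pos] <;> linarith)
    linarith

lemma F_intervalIntegrable (h : H1 f b β) {a c : ℝ} (ha : 0 ≤ a) (hc : 0 ≤ c) :
    IntervalIntegrable f MeasureTheory.volume a c := by
  apply ContinuousOn.intervalIntegrable
  apply h.1.mono
  rw [uIcc_eq_union]
  rintro x hx
  rcases hx with hx | hx
  · exact le_trans ha hx.1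
  · exact le_trans hc hx.1

lemma F_hasDerivAt (h : H1 f b β) {s : ℝ} (hs : 0 < s) :
    HasDerivAt (Fint f) (f s) s := by
  apply intervalIntegral.integral_hasDerivAt_right (F_intervalIntegrable h le_rfl hs.le)
  · exact ContinuousAt.stronglyMeasurableAtFilter isOpen_Ioi
      (fun x hx => h.fcont hx) s hs
  · exact h.fcont hs

end Base
section FFacts

variable {f : ℝ → ℝ} {b β : ℝ}

lemma F_sub (h : H1 f b β) {s : ℝ} (hs : β ≤ s) :
    Fint f s = ∫ t in β..s, f t := by
  have h0 : Fint f β = 0 := h.2.2.2.2.2.2.2.2.2.1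
  have := intervalIntegral.integral_add_adjacent_intervals
    (F_intervalIntegrable h le_rfl h.βpos.le)
    (F_intervalIntegrable h h.βpos.le (h.βpos.le.trans hs))
  unfold Fint at *
  rw [← this, h0, zero_add]

lemma F_nonneg (h : H1 f b β) {s : ℝ} (hs : β ≤ s) : 0 ≤ Fint f s := by
  rw [F_sub h hs]
  apply intervalIntegral.integral_nonneg hs
  intro x hx
  exact h.fnonnegβ hx.1

lemma F_pos (h : H1 f b β) {s : ℝ} (hs : β < s) : 0 < Fint f s := by
  rw [F_sub h hs.le]
  apply intervalIntegral.intervalIntegral_pos_of_pos_on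
    (F_intervalIntegrable h h.βpos.le (h.βpos.le.trans hs.le))
  · intro x hx
    exact h.fposβ hx.1
  · exact hs

lemma G_hasDerivAt {N : ℕ} (hN : 2 < N) (h2 : H2 N f β) {s : ℝ} (hs : β < s) :
    HasDerivAt (fun t => Fint f t / f t) (deriv (fun t => Fint f t / f t) s) s := by
  have hd : DifferentiableAt ℝ (fun t => Fint f t / f t) s := by
    by_contra hnd
    have := deriv_zero_of_not_differentiableAt hnd
    have h3 := h2 s hs
    rw [this] at h3
    have hN' : (2:ℝ) < N := by exact_mod_cast hN
    have : 0 < ((N:ℝ) - 2) / (2*N) := div_pos (by linarith) (by linarith)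
    linarith
  exact hd.hasDerivAt

end FFacts

section Branch

variable {N : ℕ} {f : ℝ → ℝ}

/-- `Y(s) = -u'(ρ(s))`, i.e. `ρ(s)J(s)`. -/
noncomputable def SolBranch.Y (B : SolBranch N f) (s : ℝ) : ℝ := -deriv B.u (B.ρ s)

namespace SolBranch

variable (B : SolBranch N f) {s : ℝ}

lemma Ypos (hs : s ∈ B.S) : 0 < B.Y s := by
  have := B.dec s hs; unfold SolBranch.Y; linarith

lemma ρ_hasDerivAt (hs : s ∈ B.S) : HasDerivAt B.ρ (-1 / B.Y s) s := by
  have h := B.invd s hs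
  have : (1 : ℝ) / deriv B.u (B.ρ s) = -1 / B.Y s := by
    unfold SolBranch.Y; exact (neg_div_neg_eq 1 _).symm
  rwa [this] at h

lemma derivρ_eq (hs : s ∈ B.S) : deriv B.ρ s = -1 / B.Y s :=
  (B.ρ_hasDerivAt hs).deriv

lemma J_eq (hs : s ∈ B.S) : B.J s = B.Y s / B.ρ s := by
  have h1 : B.ρ s ≠ 0 := (B.pos s hs).ne'
  have h2 : B.Y s ≠ 0 := (B.Ypos hs).ne'
  rw [SolBranch.J, B.derivρ_eq hs]
  field_simp

lemma deriv2_hasDerivAt (hs : s ∈ B.S) :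
    HasDerivAt (deriv B.u) (deriv (deriv B.u) (B.ρ s)) (B.ρ s) := by
  have h : ContDiffAt ℝ 2 B.u (B.ρ s) := B.smooth s hs
  have h' : ContDiffWithinAt ℝ 2 B.u Set.univ (B.ρ s) := h
  obtain ⟨w, hw, hcd⟩ := (contDiffWithinAt_iff_contDiffOn_nhds (by norm_num)).1 h'
  simp only [insert_eq_of_mem (mem_univ _), nhdsWithin_univ] at hw
  obtain ⟨t, htw, hto, hxt⟩ := mem_nhds_iff.1 hw
  have h1 : ContDiffOn ℝ 1 (deriv B.u) t :=
    (hcd.mono htw).deriv_of_isOpen hto (by norm_num)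
  have h2 : DifferentiableAt ℝ (deriv B.u) (B.ρ s) :=
    (h1.differentiableOn one_ne_zero).differentiableAt (hto.mem_nhds hxt)
  exact h2.hasDerivAt

lemma Y_hasDerivAt (hs : s ∈ B.S) :
    HasDerivAt B.Y (((N:ℝ)-1) / B.ρ s - f s / B.Y s) s := by
  have h1 : HasDerivAt (fun t => deriv B.u (B.ρ t))
      (deriv (deriv B.u) (B.ρ s) * (-1 / B.Y s)) s :=
    (B.deriv2_hasDerivAt hs).comp s (B.ρ_hasDerivAt hs)
  have hode := B.ode s hs
  have hinv := B.inv s hs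
  rw [hinv] at hode
  have hρ : B.ρ s ≠ 0 := (B.pos s hs).ne'
  have hY : B.Y s ≠ 0 := (B.Ypos hs).ne'
  have hu' : deriv B.u (B.ρ s) = -B.Y s := by unfold SolBranch.Y; ring
  have hval : -(deriv (deriv B.u) (B.ρ s) * (-1 / B.Y s))
      = ((N:ℝ)-1) / B.ρ s - f s / B.Y s := by
    have h2 : deriv (deriv B.u) (B.ρ s) = ((N:ℝ)-1)/B.ρ s * B.Y s - f s := by
      rw [hu'] at hode; ring_nf; ring_nf at hode; linarith
    rw [h2]; field_simp
  have := h1.neg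
  rw [hval] at this
  exact this

end SolBranch

end Branch
section PLayer

variable {N : ℕ} {f : ℝ → ℝ} {b β : ℝ}

/-- `Q` is `P` rewritten without `deriv ρ`. -/
noncomputable def SolBranch.Q (B : SolBranch N f) (s : ℝ) : ℝ :=
  (B.ρ s)^(N-1) * (2*(N:ℝ)*(Fint f s / f s) * B.Y s) - (B.ρ s)^N * ((B.Y s)^2 + 2*Fint f s)

namespace SolBranch

variable (B : SolBranch N f) {s : ℝ}

lemma P_eq_Q (hN : 2 < N) (hs : s ∈ B.S) : B.P s = B.Q s := by
  obtain ⟨m, rfl⟩ : ∃ m, N = m + 3 := ⟨N - 3, by omega⟩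
  have hρ : B.ρ s ≠ 0 := (B.pos s hs).ne'
  rw [SolBranch.P, SolBranch.Q, B.J_eq hs]
  set g := Fint f s / f s with hg
  show _ = B.ρ s ^ (m+2) * _ - _
  field_simp
  ring

lemma Q_hasDerivAt (hN : 2 < N) (h1 : H1 f b β) (h2 : H2 N f β)
    (hs : s ∈ B.S) (hβ : β < s) :
    HasDerivAt B.Q
      ((B.ρ s)^(N-1) * B.Y s * (2*(N:ℝ)*(deriv (fun t => Fint f t / f t) s) - ((N:ℝ)-2))) s := by
  have hρ0 : 0 < B.ρ s := B.pos s hs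
  have hY0 : 0 < B.Y s := B.Ypos hs
  have hf0 : 0 < f s := h1.fposβ hβ
  have hρ := B.ρ_hasDerivAt hs
  have hY := B.Y_hasDerivAt hs
  have hF := F_hasDerivAt h1 (h1.βpos.trans hβ)
  have hG := G_hasDerivAt hN h2 hβ
  have hA := (hρ.pow (N-1)).mul ((hG.const_mul (2*(N:ℝ))).mul hY)
  have hB' := (hρ.pow N).mul ((hY.pow 2).add (hF.const_mul 2))
  have htot := hA.sub hB'
  refine htot.congr_deriv ?_
  simp only [Pi.mul_apply, Pi.pow_apply, Pi.add_apply, Pi.sub_apply, Pi.div_apply]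
  obtain ⟨m, rfl⟩ : ∃ m, N = m + 3 := ⟨N - 3, by omega⟩
  simp only [show m+3-1 = m+2 from rfl, show m+2-1 = m+1 from rfl, show m+3 = (m+2)+1 from rfl,
    pow_succ]
  push_cast
  field_simp
  ring

end SolBranch
end PLayer
section PMono

variable {N : ℕ} {f : ℝ → ℝ} {b β : ℝ}

lemma SolBranch.P_lt (B : SolBranch N f) (hN : 2 < N) (h1 : H1 f b β) (h2 : H2 N f β)
    {sbar a : ℝ} (hS : Icc β sbar ⊆ B.S) (ha : β < a) (has : a < sbar) :
    B.P a < B.P sbar := by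
  have hmem : ∀ x ∈ Icc a sbar, x ∈ B.S := fun x hx => hS ⟨ha.le.trans hx.1, hx.2⟩
  have hβx : ∀ x ∈ Icc a sbar, β < x := fun x hx => lt_of_lt_of_le ha hx.1
  have key : StrictMonoOn B.P (Icc a sbar) := by
    apply strictMonoOn_of_deriv_pos (convex_Icc a sbar)
    · have hQc : ContinuousOn B.Q (Icc a sbar) := fun x hx =>
        ((B.Q_hasDerivAt hN h1 h2 (hmem x hx) (hβx x hx)).continuousAt).continuousWithinAt
      exact hQc.congr (fun x hx => B.P_eq_Q hN (hmem x hx))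
    · intro x hx
      rw [interior_Icc] at hx
      have hxI : x ∈ Icc a sbar := Ioo_subset_Icc_self hx
      have hQ := B.Q_hasDerivAt hN h1 h2 (hmem x hxI) (hβx x hxI)
      have hPQ : B.P =ᶠ[𝓝 x] B.Q := by
        filter_upwards [Ioo_mem_nhds (hβx x hxI) hx.2] with t ht
        exact B.P_eq_Q hN (hS (Ioo_subset_Icc_self ht))
      have hP := hQ.congr_of_eventuallyEq hPQ
      rw [hP.deriv]
      have hg := h2 x (hβx x hxI)
      have hN' : (2:ℝ) < N := by exact_mod_cast hN
      have h2N : (0:ℝ) < 2*N := by linarith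
      have : ((N:ℝ)-2) < deriv (fun t => Fint f t / f t) x * (2*N) := (div_lt_iff₀ h2N).1 hg
      have hfac : 0 < 2*(N:ℝ)*(deriv (fun t => Fint f t / f t) x) - ((N:ℝ)-2) := by linarith
      exact mul_pos (mul_pos (pow_pos (B.pos x (hmem x hxI)) _) (B.Ypos (hmem x hxI))) hfac
  exact key ⟨le_rfl, has.le⟩ ⟨has.le, le_rfl⟩ has

end PMono

section BoundaryDeriv

lemma deriv_nonpos_right {g : ℝ → ℝ} {c e d : ℝ} (hce : c < e) (hd : HasDerivAt g d c)
    (h0 : g c = 0) (hneg : ∀ s ∈ Ioc c e, g s < 0) : d ≤ 0 := by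
  have h := hd.hasDerivWithinAt (s := Ioi c)
  rw [hasDerivWithinAt_iff_tendsto_slope] at h
  rw [Set.diff_singleton_eq_self (by simp : c ∉ Ioi c)] at h
  apply le_of_tendsto h
  filter_upwards [Ioc_mem_nhdsGT_of_mem ⟨le_rfl, hce⟩] with x hx
  rw [slope_def_field, h0, sub_zero]
  apply le_of_lt
  exact div_neg_of_neg_of_pos (hneg x hx) (by linarith [hx.1])

lemma deriv_nonneg_right {g : ℝ → ℝ} {c e d : ℝ} (hce : c < e) (hd : HasDerivAt g d c)
    (h0 : g c = 0) (hpos : ∀ s ∈ Ioc c e, 0 < g s) : 0 ≤ d := by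
  have := deriv_nonpos_right hce hd.neg (by simp [h0]) (fun s hs => by simp [hpos s hs])
  linarith

end BoundaryDeriv
section DeltaLayer

variable {N : ℕ} {f : ℝ → ℝ} {b β : ℝ}

/-- The comparison function `Δ(s) = -(w_u - w_v) - 2F(a_u - a_v)`. -/
noncomputable def Dfun (f : ℝ → ℝ) {N : ℕ} (Bu Bv : SolBranch N f) (s : ℝ) : ℝ :=
  -(Bu.ρ s * Bu.Y s - Bv.ρ s * Bv.Y s)
    - 2 * Fint f s * (Bu.ρ s / Bu.Y s - Bv.ρ s / Bv.Y s)

lemma D_hasDerivAt (h1 : H1 f b β) (Bu Bv : SolBranch N f) {s : ℝ}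
    (hsu : s ∈ Bu.S) (hsv : s ∈ Bv.S) (hs : 0 < s) :
    HasDerivAt (Dfun f Bu Bv)
      (-(f s) * (Bu.ρ s / Bu.Y s - Bv.ρ s / Bv.Y s)
        + 2*(N:ℝ)*Fint f s * (1/(Bu.Y s)^2 - 1/(Bv.Y s)^2)
        - 2*Fint f s * f s *
          ((Bu.ρ s / Bu.Y s)/(Bu.Y s)^2 - (Bv.ρ s / Bv.Y s)/(Bv.Y s)^2)) s := by
  have hρu := Bu.ρ_hasDerivAt hsu
  have hρv := Bv.ρ_hasDerivAt hsv
  have hYu := Bu.Y_hasDerivAt hsu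
  have hYv := Bv.Y_hasDerivAt hsv
  have hF := F_hasDerivAt h1 hs
  have hYu0 : Bu.Y s ≠ 0 := (Bu.Ypos hsu).ne'
  have hYv0 : Bv.Y s ≠ 0 := (Bv.Ypos hsv).ne'
  have hρu0 : Bu.ρ s ≠ 0 := (Bu.pos s hsu).ne'
  have hρv0 : Bv.ρ s ≠ 0 := (Bv.pos s hsv).ne'
  have htot := (((hρu.mul hYu).sub (hρv.mul hYv)).neg).sub
    ((hF.const_mul 2).mul ((hρu.div hYu hYu0).sub (hρv.div hYv hYv0)))
  refine htot.congr_deriv ?_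
  simp only [Pi.mul_apply, Pi.pow_apply, Pi.add_apply, Pi.sub_apply, Pi.div_apply]
  field_simp [hYu0, hYv0, hρu0, hρv0]
  ring


/-- The core contradiction: an upward zero-crossing of `Δ` (from `0` to negative values)
at a point `s₂ > β` where `Y_u > Y_v` and `P_u < 0` is impossible. -/
lemma core_contradiction (hN : 2 < N) (h1 : H1 f b β) (h2 : H2 N f β)
    (Bu Bv : SolBranch N f) {sbar s₂ : ℝ}
    (hSu : Icc β sbar ⊆ Bu.S) (hSv : Icc β sbar ⊆ Bv.S)
    (hβ2 : β < s₂) (h2s : s₂ < sbar)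
    (hY : Bv.Y s₂ < Bu.Y s₂) (hPu2 : Bu.P s₂ < 0)
    (hD0 : Dfun f Bu Bv s₂ = 0)
    (hDneg : ∀ s ∈ Ioc s₂ sbar, Dfun f Bu Bv s < 0) : False := by
  have hmem : s₂ ∈ Icc β sbar := ⟨hβ2.le, h2s.le⟩
  have hsu := hSu hmem
  have hsv := hSv hmem
  have hd := D_hasDerivAt h1 Bu Bv hsu hsv (h1.βpos.trans hβ2)
  have hle := deriv_nonpos_right h2s hd hD0 hDneg
  set xu := Bu.ρ s₂ with hxu
  set xv := Bv.ρ s₂ with hxv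
  set yu := Bu.Y s₂ with hyu
  set yv := Bv.Y s₂ with hyv
  set F := Fint f s₂ with hFdef
  have hxu0 : 0 < xu := Bu.pos s₂ hsu
  have hxv0 : 0 < xv := Bv.pos s₂ hsv
  have hyu0 : 0 < yu := Bu.Ypos hsu
  have hyv0 : 0 < yv := Bv.Ypos hsv
  have hf0 : 0 < f s₂ := h1.fposβ hβ2
  have hF0 : 0 ≤ F := F_nonneg h1 hβ2.le
  -- polynomial form of `Δ(s₂) = 0`
  have e2 : xv*(yv^2+2*F)*yu = xu*(yu^2+2*F)*yv := by
    have h := hD0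
    rw [Dfun] at h
    field_simp [hyu0.ne', hyv0.ne'] at h
    have h' : -(xu*yu - xv*yv) - 2*F*(xu/yu - xv/yv) = 0 := h
    field_simp at h'
    linear_combination h'
  -- from P_u(s₂) < 0 : 2 N F * yu < xu * (yu²+2F) * f s₂
  have hkey : 2*(N:ℝ)*F*yu < xu*(yu^2+2*F) * f s₂ := by
    rw [Bu.P_eq_Q hN hsu, SolBranch.Q] at hPu2
    obtain ⟨m, rfl⟩ : ∃ m, N = m + 3 := ⟨N - 3, by omega⟩
    have hxpow : (0:ℝ) < xu^(m+2) := pow_pos hxu0 _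
    have h5 : xu^(m+3) = xu^(m+2)*xu := by ring
    rw [show m+3-1 = m+2 from rfl, h5] at hPu2
    have h6 : xu^(m+2) * (2*((m+3:ℕ):ℝ)*(F / f s₂) * yu - xu*(yu^2+2*F)) < 0 := by
      ring_nf at hPu2 ⊢
      linarith [hPu2]
    have h7 : 2*((m+3:ℕ):ℝ)*(F / f s₂) * yu < xu*(yu^2+2*F) :=
      by nlinarith [h6, hxpow]
    have h8 := mul_lt_mul_of_pos_right h7 hf0
    calc 2*((m+3:ℕ):ℝ)*F*yu = 2*((m+3:ℕ):ℝ)*(F / f s₂) * yu * f s₂ := by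
          field_simp
    _ < xu*(yu^2+2*F) * f s₂ := h8
  -- the derivative value is nonpositive; show it is positive
  have hsq : 1/yu^2 - 1/yv^2 < 0 := by
    have hy2 : yv^2 < yu^2 := by nlinarith
    have h1' : 1/yu^2 < 1/yv^2 := one_div_lt_one_div_of_lt (by positivity) hy2
    linarith
  -- clear denominators in hle
  have hpos : (0:ℝ) <
      -(f s₂) * (xu/yu - xv/yv) + 2*(N:ℝ)*F*(1/yu^2 - 1/yv^2)
        - 2*F*(f s₂)*((xu/yu)/yu^2 - (xv/yv)/yv^2) := by
    have hval : -(f s₂) * (xu/yu - xv/yv) + 2*(N:ℝ)*F*(1/yu^2 - 1/yv^2)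
        - 2*F*(f s₂)*((xu/yu)/yu^2 - (xv/yv)/yv^2)
        = (2*(N:ℝ)*F*yu - xu*(yu^2+2*F)*(f s₂)) * (1/yu^2 - 1/yv^2) / yu := by
      rw [eq_div_iff (hyu0.ne' : yu ≠ 0)]
      field_simp [hyu0.ne', hyv0.ne', hf0.ne']
      linear_combination (f s₂ * yu^2) * e2
    rw [hval]
    apply div_pos _ hyu0
    exact mul_pos_of_neg_of_neg (by linarith) hsq
  linarith

end DeltaLayer
section Gronwall

variable {N : ℕ} {f : ℝ → ℝ} {b β : ℝ}

/-- Arithmetic estimate for the Gronwall argument. -/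
private lemma pair_bound (Nr M δ xu xv yu yv fx : ℝ)
    (hN1 : 1 ≤ Nr) (hM0 : 0 ≤ M) (hδ0 : 0 < δ)
    (hxu : δ ≤ xu) (hxv : δ ≤ xv) (hyu : δ ≤ yu) (hyv : δ ≤ yv)
    (hfx : |fx| ≤ M) :
    |(-1/yu) - (-1/yv)| ≤ (Nr+M)/δ^2 * (|xu - xv| ⊔ |yu - yv|) ∧
    |((Nr-1)/xu - fx/yu) - ((Nr-1)/xv - fx/yv)|
      ≤ (Nr+M)/δ^2 * (|xu - xv| ⊔ |yu - yv|) := by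
  have hxu0 : (0:ℝ) < xu := lt_of_lt_of_le hδ0 hxu
  have hxv0 : (0:ℝ) < xv := lt_of_lt_of_le hδ0 hxv
  have hyu0 : (0:ℝ) < yu := lt_of_lt_of_le hδ0 hyu
  have hyv0 : (0:ℝ) < yv := lt_of_lt_of_le hδ0 hyv
  have hyy : δ^2 ≤ yu*yv := by nlinarith
  have hxx : δ^2 ≤ xu*xv := by nlinarith
  have hA : 1/(yu*yv) ≤ 1/δ^2 := one_div_le_one_div_of_le (by positivity) hyy
  have hB : 1/(xu*xv) ≤ 1/δ^2 := one_div_le_one_div_of_le (by positivity) hxx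
  have hsup0 : 0 ≤ |xu - xv| ⊔ |yu - yv| := le_trans (abs_nonneg _) (le_max_left _ _)
  have hd2 : (0:ℝ) ≤ 1/δ^2 := by positivity
  have h1δK : 1/δ^2 ≤ (Nr+M)/δ^2 := by gcongr; linarith
  constructor
  · have e1 : (-1/yu) - (-1/yv) = (yu - yv) * (1/(yu*yv)) := by
      field_simp
      ring
    rw [e1, abs_mul, abs_of_pos (show (0:ℝ) < 1/(yu*yv) by positivity)]
    calc |yu - yv| * (1/(yu*yv))
        ≤ (|xu - xv| ⊔ |yu - yv|) * ((Nr+M)/δ^2) := by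
          apply mul_le_mul (le_max_right _ _) (hA.trans h1δK) (by positivity) hsup0
      _ = (Nr+M)/δ^2 * (|xu - xv| ⊔ |yu - yv|) := by ring
  · have e2 : ((Nr-1)/xu - fx/yu) - ((Nr-1)/xv - fx/yv)
        = (-((Nr-1) * (xu - xv))) * (1/(xu*xv)) + (fx * (yu - yv)) * (1/(yu*yv)) := by
      field_simp
      ring
    rw [e2]
    have habs := abs_add_le ((-((Nr-1) * (xu - xv))) * (1/(xu*xv)))
      ((fx * (yu - yv)) * (1/(yu*yv)))
    have b1 : |(-((Nr-1) * (xu - xv))) * (1/(xu*xv))|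
        ≤ (Nr-1) * (|xu - xv| ⊔ |yu - yv|) * (1/δ^2) := by
      rw [abs_mul, abs_neg, abs_mul, abs_of_nonneg (by linarith : (0:ℝ) ≤ Nr - 1),
        abs_of_pos (show (0:ℝ) < 1/(xu*xv) by positivity)]
      apply mul_le_mul _ hB (by positivity) (mul_nonneg (by linarith) hsup0)
      exact mul_le_mul_of_nonneg_left (le_max_left _ _) (by linarith)
    have b2 : |(fx * (yu - yv)) * (1/(yu*yv))|
        ≤ M * (|xu - xv| ⊔ |yu - yv|) * (1/δ^2) := by
      rw [abs_mul, abs_mul, abs_of_pos (show (0:ℝ) < 1/(yu*yv) by positivity)]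
      apply mul_le_mul _ hA (by positivity) (mul_nonneg hM0 hsup0)
      exact mul_le_mul hfx (le_max_right _ _) (abs_nonneg _) hM0
    have hfin : (Nr-1) * (|xu - xv| ⊔ |yu - yv|) * (1/δ^2)
        + M * (|xu - xv| ⊔ |yu - yv|) * (1/δ^2)
        ≤ (Nr+M)/δ^2 * (|xu - xv| ⊔ |yu - yv|) := by
      have : (0:ℝ) ≤ (|xu - xv| ⊔ |yu - yv|) * (1/δ^2) := mul_nonneg hsup0 hd2
      have heq : (Nr+M)/δ^2 * (|xu - xv| ⊔ |yu - yv|)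
          = (Nr-1) * (|xu - xv| ⊔ |yu - yv|) * (1/δ^2)
            + M * (|xu - xv| ⊔ |yu - yv|) * (1/δ^2)
            + (|xu - xv| ⊔ |yu - yv|) * (1/δ^2) := by
        field_simp
        ring
      linarith
    linarith

lemma gronwall_zero (hN : 2 < N) (h1 : H1 f b β) (Bu Bv : SolBranch N f) {sbar s₀ : ℝ}
    (hSu : Icc β sbar ⊆ Bu.S) (hSv : Icc β sbar ⊆ Bv.S)
    (hs₀ : s₀ ∈ Icc β sbar) (hs : s₀ < sbar)
    (hx0 : Bu.ρ s₀ = Bv.ρ s₀) (hy0 : Bu.Y s₀ = Bv.Y s₀) :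
    Bu.ρ sbar = Bv.ρ sbar := by
  have hsub : Icc s₀ sbar ⊆ Icc β sbar := Icc_subset_Icc hs₀.1 le_rfl
  have hne : (Icc s₀ sbar).Nonempty := ⟨s₀, le_rfl, hs.le⟩
  have hcρu : ContinuousOn Bu.ρ (Icc s₀ sbar) := fun x hx =>
    ((Bu.ρ_hasDerivAt (hSu (hsub hx))).continuousAt).continuousWithinAt
  have hcρv : ContinuousOn Bv.ρ (Icc s₀ sbar) := fun x hx =>
    ((Bv.ρ_hasDerivAt (hSv (hsub hx))).continuousAt).continuousWithinAt
  have hcYu : ContinuousOn Bu.Y (Icc s₀ sbar) := fun x hx =>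
    ((Bu.Y_hasDerivAt (hSu (hsub hx))).continuousAt).continuousWithinAt
  have hcYv : ContinuousOn Bv.Y (Icc s₀ sbar) := fun x hx =>
    ((Bv.Y_hasDerivAt (hSv (hsub hx))).continuousAt).continuousWithinAt
  obtain ⟨z1, hz1, hm1⟩ := isCompact_Icc.exists_isMinOn hne hcρu
  obtain ⟨z2, hz2, hm2⟩ := isCompact_Icc.exists_isMinOn hne hcρv
  obtain ⟨z3, hz3, hm3⟩ := isCompact_Icc.exists_isMinOn hne hcYu
  obtain ⟨z4, hz4, hm4⟩ := isCompact_Icc.exists_isMinOn hne hcYv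
  obtain ⟨δ, hδdef⟩ : ∃ δ : ℝ, δ = min (min (Bu.ρ z1) (Bv.ρ z2)) (min (Bu.Y z3) (Bv.Y z4)) :=
    ⟨_, rfl⟩
  have hδ0 : 0 < δ := by
    rw [hδdef]
    apply lt_min (lt_min _ _) (lt_min _ _)
    · exact Bu.pos z1 (hSu (hsub hz1))
    · exact Bv.pos z2 (hSv (hsub hz2))
    · exact Bu.Ypos (hSu (hsub hz3))
    · exact Bv.Ypos (hSv (hsub hz4))
  have hδρu : ∀ x ∈ Icc s₀ sbar, δ ≤ Bu.ρ x := fun x hx => hδdef ▸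
    le_trans (min_le_left _ _) (le_trans (min_le_left _ _) (isMinOn_iff.1 hm1 x hx))
  have hδρv : ∀ x ∈ Icc s₀ sbar, δ ≤ Bv.ρ x := fun x hx => hδdef ▸
    le_trans (min_le_left _ _) (le_trans (min_le_right _ _) (isMinOn_iff.1 hm2 x hx))
  have hδYu : ∀ x ∈ Icc s₀ sbar, δ ≤ Bu.Y x := fun x hx => hδdef ▸
    le_trans (min_le_right _ _) (le_trans (min_le_left _ _) (isMinOn_iff.1 hm3 x hx))
  have hδYv : ∀ x ∈ Icc s₀ sbar, δ ≤ Bv.Y x := fun x hx => hδdef ▸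
    le_trans (min_le_right _ _) (le_trans (min_le_right _ _) (isMinOn_iff.1 hm4 x hx))
  have hcf : ContinuousOn f (Icc s₀ sbar) := by
    apply h1.1.mono
    intro x hx
    exact le_trans (le_trans h1.βpos.le hs₀.1) hx.1
  obtain ⟨M, hM⟩ := isCompact_Icc.exists_bound_of_continuousOn hcf
  have hM0 : 0 ≤ M := le_trans (norm_nonneg _) (hM s₀ ⟨le_rfl, hs.le⟩)
  -- the pair function and its derivative
  set w : ℝ → ℝ × ℝ := fun s => (Bu.ρ s - Bv.ρ s, Bu.Y s - Bv.Y s) with hwdef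
  set w' : ℝ → ℝ × ℝ := fun s =>
    ((-1/Bu.Y s) - (-1/Bv.Y s),
      (((N:ℝ)-1)/Bu.ρ s - f s/Bu.Y s) - (((N:ℝ)-1)/Bv.ρ s - f s/Bv.Y s)) with hw'def
  have hw : ∀ x ∈ Icc s₀ sbar, HasDerivAt w (w' x) x := by
    intro x hx
    exact ((Bu.ρ_hasDerivAt (hSu (hsub hx))).sub (Bv.ρ_hasDerivAt (hSv (hsub hx)))).prodMk
      (((Bu.Y_hasDerivAt (hSu (hsub hx))).sub (Bv.Y_hasDerivAt (hSv (hsub hx)))))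
  have hNR : (1:ℝ) ≤ (N:ℝ) := by exact_mod_cast (by omega : 1 ≤ N)
  have key := norm_le_gronwallBound_of_norm_deriv_right_le
    (f := w) (f' := w') (δ := 0) (K := ((N:ℝ)+M)/δ^2) (ε := 0) (a := s₀) (b := sbar)
    (fun x hx => ((hw x hx).continuousAt).continuousWithinAt)
    (fun x hx => ((hw x (Ico_subset_Icc_self hx)).hasDerivWithinAt))
    (by rw [hwdef]; simp [hx0, hy0])
    ?_ sbar ⟨hs.le, le_rfl⟩
  · rw [gronwallBound_ε0_δ0] at key
    have h2 : |Bu.ρ sbar - Bv.ρ sbar| ≤ ‖w sbar‖ := by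
      rw [hwdef, Prod.norm_def]
      simp only [Real.norm_eq_abs]
      exact le_max_left _ _
    have := le_trans h2 key
    have habs : |Bu.ρ sbar - Bv.ρ sbar| = 0 := le_antisymm this (abs_nonneg _)
    have := abs_eq_zero.1 habs
    linarith
  · intro x hx
    have hx' := Ico_subset_Icc_self hx
    have hb := pair_bound (N:ℝ) M δ (Bu.ρ x) (Bv.ρ x) (Bu.Y x) (Bv.Y x) (f x)
      hNR hM0 hδ0 (hδρu x hx') (hδρv x hx') (hδYu x hx') (hδYv x hx')
      (by rw [← Real.norm_eq_abs]; exact hM x hx')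
    rw [hwdef, hw'def]
    rw [Prod.norm_def, Prod.norm_def]
    simp only [Real.norm_eq_abs, add_zero]
    exact max_le hb.1 hb.2
end Gronwall
section BetaCase

variable {N : ℕ} {f : ℝ → ℝ} {b β : ℝ}

lemma F_mono (h1 : H1 f b β) {t s : ℝ} (ht : β ≤ t) (hts : t ≤ s) :
    Fint f t ≤ Fint f s := by
  have h0t : (0:ℝ) ≤ t := le_trans h1.βpos.le ht
  have := intervalIntegral.integral_add_adjacent_intervals
    (F_intervalIntegrable h1 le_rfl h0t)
    (F_intervalIntegrable h1 h0t (h0t.trans hts))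
  unfold Fint at *
  rw [← this]
  have : 0 ≤ ∫ x in t..s, f x := by
    apply intervalIntegral.integral_nonneg hts
    intro x hx
    exact h1.fnonnegβ (le_trans ht hx.1)
  linarith

set_option maxHeartbeats 800000 in
lemma beta_case (hN : 2 < N) (h1 : H1 f b β) (Bu Bv : SolBranch N f) {sbar : ℝ}
    (hSu : Icc β sbar ⊆ Bu.S) (hSv : Icc β sbar ⊆ Bv.S) (hβs : β < sbar)
    (hYall : ∀ s ∈ Icc β sbar, Bv.Y s < Bu.Y s)
    (hD0 : Dfun f Bu Bv β = 0)
    (hDneg : ∀ s ∈ Ioc β sbar, Dfun f Bu Bv s < 0) : False := by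
  have memβ : β ∈ Icc β sbar := ⟨le_rfl, hβs.le⟩
  have hsuβ := hSu memβ
  have hsvβ := hSv memβ
  have hFβ : Fint f β = 0 := h1.2.2.2.2.2.2.2.2.2.1
  have hxu0 : 0 < Bu.ρ β := Bu.pos β hsuβ
  have hxv0 : 0 < Bv.ρ β := Bv.pos β hsvβ
  have hyu0 : 0 < Bu.Y β := Bu.Ypos hsuβ
  have hyv0 : 0 < Bv.Y β := Bv.Ypos hsvβ
  have hyβ : Bv.Y β < Bu.Y β := hYall β memβ
  -- w_u(β) = w_v(β)
  have hw : Bu.ρ β * Bu.Y β = Bv.ρ β * Bv.Y β := by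
    rw [Dfun, hFβ] at hD0
    ring_nf at hD0
    linarith
  -- a_u(β) < a_v(β)
  have haβ : Bu.ρ β / Bu.Y β < Bv.ρ β / Bv.Y β := by
    rw [div_lt_div_iff₀ hyu0 hyv0]
    nlinarith
  have hηβ : (Bu.ρ β / Bu.Y β)/(Bu.Y β)^2 < (Bv.ρ β / Bv.Y β)/(Bv.Y β)^2 := by
    rw [div_lt_div_iff₀ (by positivity) (by positivity), div_mul_eq_mul_div, div_mul_eq_mul_div,
      div_lt_div_iff₀ hyu0 hyv0]
    have h4 : Bv.Y β^4 < Bu.Y β^4 := pow_lt_pow_left₀ hyβ hyv0.le (by norm_num)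
    have key : Bu.ρ β * Bv.Y β^2 * Bv.Y β * Bu.Y β < Bv.ρ β * Bu.Y β^2 * Bu.Y β * Bu.Y β := by
      have e : Bu.ρ β * Bv.Y β^2 * Bv.Y β * Bu.Y β = Bv.ρ β * Bv.Y β^4 := by
        linear_combination Bv.Y β^3 * hw
      rw [e]; nlinarith [h4, hxv0]
    exact lt_of_mul_lt_mul_right key hyu0.le
  -- the functions φ and ψ
  obtain ⟨φ, hφdef⟩ : ∃ φ : ℝ → ℝ, φ = fun s => Bu.ρ s / Bu.Y s - Bv.ρ s / Bv.Y s := ⟨_, rfl⟩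
  obtain ⟨ψ, hψdef⟩ : ∃ ψ : ℝ → ℝ,
      ψ = fun s => (Bu.ρ s/Bu.Y s)/(Bu.Y s)^2 - (Bv.ρ s/Bv.Y s)/(Bv.Y s)^2 := ⟨_, rfl⟩
  obtain ⟨δ₀, hδ₀⟩ : ∃ d : ℝ, d = (Bv.ρ β / Bv.Y β - Bu.ρ β / Bu.Y β)/2 := ⟨_, rfl⟩
  have hδ₀0 : 0 < δ₀ := by rw [hδ₀]; linarith
  -- continuity of the coordinate functions on the interval
  have hCρu : ∀ x ∈ Icc β sbar, ContinuousAt Bu.ρ x := fun x hx =>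
    (Bu.ρ_hasDerivAt (hSu hx)).continuousAt
  have hCρv : ∀ x ∈ Icc β sbar, ContinuousAt Bv.ρ x := fun x hx =>
    (Bv.ρ_hasDerivAt (hSv hx)).continuousAt
  have hCYu : ∀ x ∈ Icc β sbar, ContinuousAt Bu.Y x := fun x hx =>
    (Bu.Y_hasDerivAt (hSu hx)).continuousAt
  have hCYv : ∀ x ∈ Icc β sbar, ContinuousAt Bv.Y x := fun x hx =>
    (Bv.Y_hasDerivAt (hSv hx)).continuousAt
  have hCφ : ∀ x ∈ Icc β sbar, ContinuousAt φ x := by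
    intro x hx
    rw [hφdef]
    exact (((hCρu x hx).div (hCYu x hx) (Bu.Ypos (hSu hx)).ne')).sub
      (((hCρv x hx).div (hCYv x hx) (Bv.Ypos (hSv hx)).ne'))
  have hCψ : ∀ x ∈ Icc β sbar, ContinuousAt ψ x := by
    intro x hx
    rw [hψdef]
    exact ((((hCρu x hx).div (hCYu x hx) (Bu.Ypos (hSu hx)).ne')).div
        ((hCYu x hx).pow 2) (pow_ne_zero 2 (Bu.Ypos (hSu hx)).ne')).sub
      ((((hCρv x hx).div (hCYv x hx) (Bv.Ypos (hSv hx)).ne')).div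
        ((hCYv x hx).pow 2) (pow_ne_zero 2 (Bv.Ypos (hSv hx)).ne'))
  -- a neighbourhood of β where φ < -δ₀ and ψ < 0
  have hφβ : φ β < -δ₀ := by rw [hφdef, hδ₀]; simp; linarith
  have hψβ : ψ β < 0 := by rw [hψdef]; simp; linarith
  have hev1 : ∀ᶠ x in 𝓝 β, φ x < -δ₀ := (hCφ β memβ).eventually_lt_const hφβ
  have hev2 : ∀ᶠ x in 𝓝 β, ψ x < 0 := (hCψ β memβ).eventually_lt_const hψβ
  obtain ⟨ε, hε0, hball⟩ := Metric.eventually_nhds_iff.1 (hev1.and hev2)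
  -- the lower bound for 1/Y_v²
  have hCYv' : ContinuousOn Bv.Y (Icc β sbar) := fun x hx => (hCYv x hx).continuousWithinAt
  obtain ⟨z4, hz4, hm4⟩ := isCompact_Icc.exists_isMinOn ⟨β, memβ⟩ hCYv'
  obtain ⟨δy, hδydef⟩ : ∃ d : ℝ, d = Bv.Y z4 := ⟨_, rfl⟩
  have hδy0 : 0 < δy := by rw [hδydef]; exact Bv.Ypos (hSv hz4)
  have hδyY : ∀ x ∈ Icc β sbar, δy ≤ Bv.Y x := fun x hx =>
    hδydef ▸ isMinOn_iff.1 hm4 x hx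
  obtain ⟨C, hCdef⟩ : ∃ c : ℝ, c = 2*(N:ℝ)/δy^2 := ⟨_, rfl⟩
  have hC0 : 0 < C := by
    rw [hCdef]
    have : (0:ℝ) < N := by exact_mod_cast (by omega : 0 < N)
    positivity
  -- choose the right endpoint s'
  obtain ⟨s', hs'def⟩ : ∃ t : ℝ, t = min (β + ε/2) (min sbar (β + δ₀/(2*C))) := ⟨_, rfl⟩
  have hs'1 : β < s' := by
    rw [hs'def]
    have hpos : (0:ℝ) < δ₀/(2*C) := div_pos hδ₀0 (by linarith)
    apply lt_min (by linarith) (lt_min hβs (by linarith))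
  have hs'2 : s' ≤ sbar := by rw [hs'def]; exact le_trans (min_le_right _ _) (min_le_left _ _)
  have hs'3 : C*(s' - β) ≤ δ₀/2 := by
    have : s' ≤ β + δ₀/(2*C) := by
      rw [hs'def]; exact le_trans (min_le_right _ _) (min_le_right _ _)
    have h2 : s' - β ≤ δ₀/(2*C) := by linarith
    calc C*(s' - β) ≤ C*(δ₀/(2*C)) := mul_le_mul_of_nonneg_left h2 hC0.le
    _ = δ₀/2 := by field_simp
  have hs'ball : ∀ t ∈ Icc β s', φ t < -δ₀ ∧ ψ t < 0 := by
    intro t ht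
    apply hball
    rw [Real.dist_eq, abs_of_nonneg (by linarith [ht.1])]
    have : s' ≤ β + ε/2 := by rw [hs'def]; exact min_le_left _ _
    linarith [ht.2]
  -- the derivative expression E
  obtain ⟨E, hEdef⟩ : ∃ E : ℝ → ℝ, E = fun s =>
      (-(f s) * (Bu.ρ s / Bu.Y s - Bv.ρ s / Bv.Y s)
        + 2*(N:ℝ)*Fint f s * (1/(Bu.Y s)^2 - 1/(Bv.Y s)^2)
        - 2*Fint f s * f s *
          ((Bu.ρ s / Bu.Y s)/(Bu.Y s)^2 - (Bv.ρ s / Bv.Y s)/(Bv.Y s)^2)) := ⟨_, rfl⟩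
  have hIs' : Icc β s' ⊆ Icc β sbar := Icc_subset_Icc le_rfl hs'2
  have hEderiv : ∀ t ∈ Icc β s', HasDerivAt (Dfun f Bu Bv) (E t) t := by
    intro t ht
    rw [hEdef]
    exact D_hasDerivAt h1 Bu Bv (hSu (hIs' ht)) (hSv (hIs' ht))
      (lt_of_lt_of_le h1.βpos ht.1)
  have hCE : ContinuousOn E (Icc β s') := by
    intro t ht
    have ht' := hIs' ht
    have hft : ContinuousAt f t := h1.fcont (lt_of_lt_of_le h1.βpos ht.1)
    have hFt : ContinuousAt (Fint f) t :=
      (F_hasDerivAt h1 (lt_of_lt_of_le h1.βpos ht.1)).continuousAt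
    rw [hEdef]
    apply ContinuousAt.continuousWithinAt
    have hyu' := (Bu.Ypos (hSu ht')).ne'
    have hyv' := (Bv.Ypos (hSv ht')).ne'
    have c1 : ContinuousAt (fun s => -(f s) * (Bu.ρ s / Bu.Y s - Bv.ρ s / Bv.Y s)) t :=
      hft.neg.mul (((hCρu t ht').div (hCYu t ht') hyu').sub
        (((hCρv t ht').div (hCYv t ht') hyv')))
    have c2 : ContinuousAt (fun s => 2*(N:ℝ)*Fint f s * (1/(Bu.Y s)^2 - 1/(Bv.Y s)^2)) t :=
      (continuousAt_const.mul hFt).mul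
        ((continuousAt_const.div ((hCYu t ht').pow 2) (pow_ne_zero 2 hyu')).sub
          (continuousAt_const.div ((hCYv t ht').pow 2) (pow_ne_zero 2 hyv')))
    have c3 : ContinuousAt (fun s => 2*Fint f s * f s *
        ((Bu.ρ s / Bu.Y s)/(Bu.Y s)^2 - (Bv.ρ s / Bv.Y s)/(Bv.Y s)^2)) t :=
      ((continuousAt_const.mul hFt).mul hft).mul
        ((((hCρu t ht').div (hCYu t ht') hyu').div ((hCYu t ht').pow 2)
            (pow_ne_zero 2 hyu')).sub
          ((((hCρv t ht').div (hCYv t ht') hyv')).div ((hCYv t ht').pow 2)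
            (pow_ne_zero 2 hyv')))
    exact (c1.add c2).sub c3
  -- FTC
  have hFTC : ∫ t in β..s', E t = Dfun f Bu Bv s' - Dfun f Bu Bv β := by
    apply intervalIntegral.integral_eq_sub_of_hasDerivAt
    · intro t ht
      rw [uIcc_of_le hs'1.le] at ht
      exact hEderiv t ht
    · apply ContinuousOn.intervalIntegrable
      rw [uIcc_of_le hs'1.le]
      exact hCE
  -- pointwise lower bound for E
  have hptwise : ∀ t ∈ Icc β s', δ₀ * f t - C * Fint f t ≤ E t := by
    intro t ht
    have ht' := hIs' ht
    obtain ⟨hφt, hψt⟩ := hs'ball t ht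
    have hft0 : 0 ≤ f t := h1.fnonnegβ ht.1
    have hFt0 : 0 ≤ Fint f t := F_nonneg h1 ht.1
    have hyu0' : 0 < Bu.Y t := Bu.Ypos (hSu ht')
    have hyv0' : 0 < Bv.Y t := Bv.Ypos (hSv ht')
    have t1 : δ₀ * f t ≤ -(f t) * φ t := by nlinarith
    have t2 : -C * Fint f t ≤ 2*(N:ℝ)*Fint f t * (1/(Bu.Y t)^2 - 1/(Bv.Y t)^2) := by
      have hb1 : 1/(Bu.Y t)^2 - 1/(Bv.Y t)^2 ≥ -(1/δy^2) := by
        have h5 : 1/(Bv.Y t)^2 ≤ 1/δy^2 := by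
          apply one_div_le_one_div_of_le (by positivity)
          have := hδyY t ht'
          nlinarith
        have h6 : 0 < 1/(Bu.Y t)^2 := by positivity
        linarith
      have hN0 : (0:ℝ) ≤ 2*(N:ℝ)*Fint f t := by positivity
      have := mul_le_mul_of_nonneg_left hb1 hN0
      calc -C * Fint f t = 2*(N:ℝ)*Fint f t * (-(1/δy^2)) := by rw [hCdef]; field_simp
      _ ≤ 2*(N:ℝ)*Fint f t * (1/(Bu.Y t)^2 - 1/(Bv.Y t)^2) := by
          exact mul_le_mul_of_nonneg_left hb1 hN0
    have t3 : 0 ≤ -(2*Fint f t * f t * ψ t) := by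
      have : 0 ≤ 2*Fint f t * f t := by positivity
      nlinarith
    rw [hEdef, hφdef] at *
    rw [hψdef] at hψt t3
    simp only at t1 t3 ⊢
    linarith
  -- integral comparison
  have hint1 : IntervalIntegrable (fun t => δ₀ * f t - C * Fint f t) MeasureTheory.volume β s' := by
    apply ContinuousOn.intervalIntegrable
    rw [uIcc_of_le hs'1.le]
    intro t ht
    apply ContinuousAt.continuousWithinAt
    exact (continuousAt_const.mul (h1.fcont (lt_of_lt_of_le h1.βpos ht.1))).sub
      (continuousAt_const.mul (F_hasDerivAt h1 (lt_of_lt_of_le h1.βpos ht.1)).continuousAt)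
  have hint2 : IntervalIntegrable E MeasureTheory.volume β s' := by
    apply ContinuousOn.intervalIntegrable
    rw [uIcc_of_le hs'1.le]
    exact hCE
  have hmono := intervalIntegral.integral_mono_on hs'1.le hint1 hint2 hptwise
  -- compute the lower integral
  have hFs' : ∫ t in β..s', f t = Fint f s' := (F_sub h1 hs'1.le).symm
  have hintF : IntervalIntegrable (Fint f) MeasureTheory.volume β s' := by
    apply ContinuousOn.intervalIntegrable
    rw [uIcc_of_le hs'1.le]
    exact fun t ht => (F_hasDerivAt h1 (lt_of_lt_of_le h1.βpos ht.1)).continuousAt.continuousWithinAt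
  have hFbound : ∫ t in β..s', Fint f t ≤ (s' - β) * Fint f s' := by
    have := intervalIntegral.integral_mono_on hs'1.le hintF
      (intervalIntegrable_const (c := Fint f s')) (fun t ht => F_mono h1 ht.1 ht.2)
    simpa using this
  have hintf : IntervalIntegrable f MeasureTheory.volume β s' :=
    F_intervalIntegrable h1 h1.βpos.le (h1.βpos.le.trans hs'1.le)
  have hsplit : ∫ t in β..s', (δ₀ * f t - C * Fint f t)
      = δ₀ * Fint f s' - C * (∫ t in β..s', Fint f t) := by
    rw [intervalIntegral.integral_sub (hintf.const_mul δ₀) (hintF.const_mul C),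
      intervalIntegral.integral_const_mul, intervalIntegral.integral_const_mul, hFs']
  -- conclude
  have hFs'0 : 0 < Fint f s' := F_pos h1 hs'1
  have hlow : δ₀ * Fint f s' - C * ((s' - β) * Fint f s')
      ≤ Dfun f Bu Bv s' - Dfun f Bu Bv β := by
    rw [← hFTC]
    refine le_trans ?_ hmono
    rw [hsplit]
    have : C * (∫ t in β..s', Fint f t) ≤ C * ((s' - β) * Fint f s') :=
      mul_le_mul_of_nonneg_left hFbound hC0.le
    linarith
  have hDβ : Dfun f Bu Bv β = 0 := hD0
  have hfinpos : 0 < δ₀ * Fint f s' - C * ((s' - β) * Fint f s') := by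
    have : C * (s' - β) ≤ δ₀/2 := hs'3
    nlinarith
  have := hDneg s' ⟨hs'1, hs'2⟩
  rw [hDβ] at hlow
  linarith

end BetaCase
section SupZero

variable {N : ℕ} {f : ℝ → ℝ} {b β : ℝ}

lemma D_continuousOn (h1 : H1 f b β) (Bu Bv : SolBranch N f) {sbar : ℝ}
    (hSu : Icc β sbar ⊆ Bu.S) (hSv : Icc β sbar ⊆ Bv.S) :
    ∀ x ∈ Icc β sbar, ContinuousAt (Dfun f Bu Bv) x := fun x hx =>
  (D_hasDerivAt h1 Bu Bv (hSu hx) (hSv hx) (lt_of_lt_of_le h1.βpos hx.1)).continuousAt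

lemma sup_zero (hN : 2 < N) (h1 : H1 f b β) (h2 : H2 N f β)
    (Bu Bv : SolBranch N f) {sbar low : ℝ}
    (hSu : Icc β sbar ⊆ Bu.S) (hSv : Icc β sbar ⊆ Bv.S)
    (hPu : Bu.P sbar < 0)
    (hlow : low ∈ Icc β sbar) (hlows : low < sbar)
    (h0 : 0 ≤ Dfun f Bu Bv low) (hDsbar : Dfun f Bu Bv sbar < 0)
    (hYgt : ∀ s ∈ Ioc low sbar, Bv.Y s < Bu.Y s) :
    Dfun f Bu Bv low = 0 ∧ ∀ s ∈ Ioc low sbar, Dfun f Bu Bv s < 0 := by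
  set A : Set ℝ := {s ∈ Icc low sbar | 0 ≤ Dfun f Bu Bv s} with hA
  have hsubI : Icc low sbar ⊆ Icc β sbar := Icc_subset_Icc hlow.1 le_rfl
  have hDC : ContinuousOn (Dfun f Bu Bv) (Icc low sbar) :=
    fun x hx => (D_continuousOn h1 Bu Bv hSu hSv x (hsubI hx)).continuousWithinAt
  have hAclosed : IsClosed A := by
    have : A = Icc low sbar ∩ (Dfun f Bu Bv) ⁻¹' (Ici 0) := by
      ext x; simp [hA, and_comm]
    rw [this]
    exact hDC.preimage_isClosed_of_isClosed isClosed_Icc isClosed_Ici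
  have hAne : A.Nonempty := ⟨low, ⟨le_rfl, hlows.le⟩, h0⟩
  have hAbdd : BddAbove A := ⟨sbar, fun x hx => hx.1.2⟩
  set s₂ := sSup A with hs₂def
  have hs₂A : s₂ ∈ A := hAclosed.csSup_mem hAne hAbdd
  have hs₂low : low ≤ s₂ := hs₂A.1.1
  have hs₂sbar : s₂ ≤ sbar := hs₂A.1.2
  have hs₂ne : s₂ ≠ sbar := by
    intro h
    rw [h] at hs₂A
    linarith [hs₂A.2]
  have hs₂lt : s₂ < sbar := lt_of_le_of_ne hs₂sbar hs₂ne
  have hneg : ∀ s ∈ Ioc s₂ sbar, Dfun f Bu Bv s < 0 := by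
    intro s hs
    by_contra hcon
    push_neg at hcon
    have : s ∈ A := ⟨⟨hs₂low.trans hs.1.le, hs.2⟩, hcon⟩
    have := le_csSup hAbdd this
    linarith [hs.1]
  have hD2 : Dfun f Bu Bv s₂ = 0 := by
    refine le_antisymm ?_ hs₂A.2
    have hcont : Tendsto (Dfun f Bu Bv) (𝓝[>] s₂) (𝓝 (Dfun f Bu Bv s₂)) :=
      ((D_continuousOn h1 Bu Bv hSu hSv s₂ ⟨hlow.1.trans hs₂low, hs₂sbar⟩).tendsto).mono_left
        nhdsWithin_le_nhds
    apply le_of_tendsto hcont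
    filter_upwards [Ioc_mem_nhdsGT hs₂lt] with x hx
    exact (hneg x hx).le
  rcases eq_or_lt_of_le hs₂low with heq | hlt
  · rw [← heq] at hD2 hneg
    exact ⟨hD2, hneg⟩
  · exfalso
    have hβ2 : β < s₂ := lt_of_le_of_lt hlow.1 hlt
    have hPu2 : Bu.P s₂ < 0 := lt_trans (Bu.P_lt hN h1 h2 hSu hβ2 hs₂lt) hPu
    exact core_contradiction hN h1 h2 Bu Bv hSu hSv hβ2 hs₂lt
      (hYgt s₂ ⟨hlt, hs₂sbar⟩) hPu2 hD2 hneg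

/-- At `s̄`, `P_u < 0 ≤ P_v` gives `Δ(s̄) < 0`. -/
lemma D_sbar_neg (hN : 2 < N) (h1 : H1 f b β) (Bu Bv : SolBranch N f) {sbar : ℝ}
    (hSu : Icc β sbar ⊆ Bu.S) (hSv : Icc β sbar ⊆ Bv.S) (hβs : β < sbar)
    (hPu : Bu.P sbar < 0) (hPv : 0 ≤ Bv.P sbar) :
    Dfun f Bu Bv sbar < 0 := by
  have hmem : sbar ∈ Icc β sbar := ⟨hβs.le, le_rfl⟩
  have hsu := hSu hmem
  have hsv := hSv hmem
  have hxu0 : 0 < Bu.ρ sbar := Bu.pos sbar hsu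
  have hxv0 : 0 < Bv.ρ sbar := Bv.pos sbar hsv
  have hyu0 : 0 < Bu.Y sbar := Bu.Ypos hsu
  have hyv0 : 0 < Bv.Y sbar := Bv.Ypos hsv
  have hf0 : 0 < f sbar := h1.fposβ hβs
  have hF0 : 0 ≤ Fint f sbar := F_nonneg h1 hβs.le
  obtain ⟨m, rfl⟩ : ∃ m, N = m + 3 := ⟨N - 3, by omega⟩
  -- u side: 2 N G yu < xu (yu² + 2F)
  have hu : 2*((m+3:ℕ):ℝ)*(Fint f sbar / f sbar) * Bu.Y sbar
      < Bu.ρ sbar * ((Bu.Y sbar)^2 + 2*Fint f sbar) := by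
    rw [Bu.P_eq_Q hN hsu, SolBranch.Q] at hPu
    have hxpow : (0:ℝ) < (Bu.ρ sbar)^(m+2) := pow_pos hxu0 _
    have h5 : (Bu.ρ sbar)^(m+3) = (Bu.ρ sbar)^(m+2)*(Bu.ρ sbar) := by ring
    rw [show m+3-1 = m+2 from rfl, h5] at hPu
    nlinarith [hPu, hxpow]
  have hv : Bv.ρ sbar * ((Bv.Y sbar)^2 + 2*Fint f sbar)
      ≤ 2*((m+3:ℕ):ℝ)*(Fint f sbar / f sbar) * Bv.Y sbar := by
    rw [Bv.P_eq_Q hN hsv, SolBranch.Q] at hPv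
    have hxpow : (0:ℝ) < (Bv.ρ sbar)^(m+2) := pow_pos hxv0 _
    have h5 : (Bv.ρ sbar)^(m+3) = (Bv.ρ sbar)^(m+2)*(Bv.ρ sbar) := by ring
    rw [show m+3-1 = m+2 from rfl, h5] at hPv
    nlinarith [hPv, hxpow]
  -- divide by y's
  have hAv : Bv.ρ sbar * ((Bv.Y sbar)^2 + 2*Fint f sbar) / Bv.Y sbar
      ≤ 2*((m+3:ℕ):ℝ)*(Fint f sbar / f sbar) :=
    (div_le_iff₀ hyv0).2 hv
  have hAu : 2*((m+3:ℕ):ℝ)*(Fint f sbar / f sbar)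
      < Bu.ρ sbar * ((Bu.Y sbar)^2 + 2*Fint f sbar) / Bu.Y sbar :=
    (lt_div_iff₀ hyu0).2 hu
  have hiden : Dfun f Bu Bv sbar
      = Bv.ρ sbar * ((Bv.Y sbar)^2 + 2*Fint f sbar) / Bv.Y sbar
        - Bu.ρ sbar * ((Bu.Y sbar)^2 + 2*Fint f sbar) / Bu.Y sbar := by
    rw [Dfun]
    field_simp
    ring
  rw [hiden]
  linarith

end SupZero
/-- Lemma 4.2 ("paso P"): there is no tangency point of the inverses on `[β, s̄]`,
and `ρ_u²J_u > ρ_v²J_v` at `β`. -/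
theorem stmt_10 (N : ℕ) (hN : 2 < N) (f : ℝ → ℝ) (b β : ℝ)
    (hH1 : H1 f b β) (hH2 : H2 N f β)
    (Bu Bv : SolBranch N f) (sbar : ℝ) (hβs : β < sbar)
    (hSu : Icc β sbar ⊆ Bu.S) (hSv : Icc β sbar ⊆ Bv.S)
    (hr : Bv.ρ sbar < Bu.ρ sbar)
    (hJ : Bv.J sbar < Bu.J sbar)
    (hPu : Bu.P sbar < 0) (hPv : 0 ≤ Bv.P sbar) :
    (∀ s ∈ Icc β sbar, deriv Bv.ρ s < deriv Bu.ρ s) ∧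
    (Bv.ρ β) ^ 2 * Bv.J β < (Bu.ρ β) ^ 2 * Bu.J β := by
  have hmem : sbar ∈ Icc β sbar := ⟨hβs.le, le_rfl⟩
  have hmemβ : β ∈ Icc β sbar := ⟨le_rfl, hβs.le⟩
  have hsu := hSu hmem
  have hsv := hSv hmem
  have hxu0 : 0 < Bu.ρ sbar := Bu.pos sbar hsu
  have hxv0 : 0 < Bv.ρ sbar := Bv.pos sbar hsv
  have hyu0 : 0 < Bu.Y sbar := Bu.Ypos hsu
  have hyv0 : 0 < Bv.Y sbar := Bv.Ypos hsv
  -- Y ordering at sbar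
  have hYsbar : Bv.Y sbar < Bu.Y sbar := by
    have e1 : Bu.Y sbar = Bu.ρ sbar * Bu.J sbar := by
      rw [Bu.J_eq hsu]; field_simp
    have e2 : Bv.Y sbar = Bv.ρ sbar * Bv.J sbar := by
      rw [Bv.J_eq hsv]; field_simp
    have hJv0 : 0 < Bv.J sbar := by
      rw [Bv.J_eq hsv]; positivity
    rw [e1, e2]
    nlinarith
  have hDsbar := D_sbar_neg hN hH1 Bu Bv hSu hSv hβs hPu hPv
  -- STEP 1: no tangency of Y's
  have key1 : ∀ s ∈ Icc β sbar, Bv.Y s < Bu.Y s := by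
    by_contra hcon
    push_neg at hcon
    obtain ⟨t, ht, hYt⟩ := hcon
    set A := {s ∈ Icc β sbar | Bu.Y s ≤ Bv.Y s} with hAdef
    have hYC : ∀ x ∈ Icc β sbar, ContinuousAt (fun s => Bu.Y s - Bv.Y s) x := fun x hx =>
      ((Bu.Y_hasDerivAt (hSu hx)).continuousAt).sub ((Bv.Y_hasDerivAt (hSv hx)).continuousAt)
    have hAclosed : IsClosed A := by
      have : A = Icc β sbar ∩ (fun s => Bu.Y s - Bv.Y s) ⁻¹' (Iic 0) := by
        ext x
        simp only [hAdef, mem_setOf_eq, mem_inter_iff, mem_preimage, mem_Iic, sub_nonpos]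
      rw [this]
      have hcontOn : ContinuousOn (fun s => Bu.Y s - Bv.Y s) (Icc β sbar) :=
        fun x hx => (hYC x hx).continuousWithinAt
      exact hcontOn.preimage_isClosed_of_isClosed isClosed_Icc isClosed_Iic
    have hAne : A.Nonempty := ⟨t, ht, hYt⟩
    have hAbdd : BddAbove A := ⟨sbar, fun x hx => hx.1.2⟩
    set s₀ := sSup A with hs₀def
    have hs₀A : s₀ ∈ A := hAclosed.csSup_mem hAne hAbdd
    have hs₀mem : s₀ ∈ Icc β sbar := hs₀A.1
    have hs₀sbar : s₀ < sbar := by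
      rcases lt_or_eq_of_le hs₀mem.2 with h | h
      · exact h
      · exfalso; rw [h] at hs₀A; linarith [hs₀A.2]
    have hYgt : ∀ s ∈ Ioc s₀ sbar, Bv.Y s < Bu.Y s := by
      intro s hs
      by_contra hc
      push_neg at hc
      have : s ∈ A := ⟨⟨hs₀mem.1.trans hs.1.le, hs.2⟩, hc⟩
      have := le_csSup hAbdd this
      linarith [hs.1]
    have hY0 : Bu.Y s₀ = Bv.Y s₀ := by
      refine le_antisymm hs₀A.2 ?_
      have hcont : Tendsto (fun s => Bu.Y s - Bv.Y s) (𝓝[>] s₀)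
          (𝓝 (Bu.Y s₀ - Bv.Y s₀)) :=
        ((hYC s₀ hs₀mem).tendsto).mono_left nhdsWithin_le_nhds
      have h6 : 0 ≤ Bu.Y s₀ - Bv.Y s₀ := by
        apply ge_of_tendsto hcont
        filter_upwards [Ioc_mem_nhdsGT hs₀sbar] with x hx
        linarith [hYgt x hx]
      linarith
    have hsu0 := hSu hs₀mem
    have hsv0 := hSv hs₀mem
    have hρu0' : 0 < Bu.ρ s₀ := Bu.pos s₀ hsu0
    have hρv0' : 0 < Bv.ρ s₀ := Bv.pos s₀ hsv0
    have hYv0' : 0 < Bv.Y s₀ := Bv.Ypos hsv0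
    have hx01 : Bu.ρ s₀ ≤ Bv.ρ s₀ := by
      have hgd : HasDerivAt (fun s => Bu.Y s - Bv.Y s)
          ((((N:ℝ)-1)/Bu.ρ s₀ - f s₀/Bu.Y s₀) - (((N:ℝ)-1)/Bv.ρ s₀ - f s₀/Bv.Y s₀)) s₀ :=
        (Bu.Y_hasDerivAt hsu0).sub (Bv.Y_hasDerivAt hsv0)
      have hd0 := deriv_nonneg_right hs₀sbar hgd (by rw [hY0]; ring)
        (fun s hs => sub_pos.2 (hYgt s hs))
      rw [hY0] at hd0
      have h7 : ((N:ℝ)-1)/Bv.ρ s₀ ≤ ((N:ℝ)-1)/Bu.ρ s₀ := by linarith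
      have hN1 : (0:ℝ) < (N:ℝ)-1 := by
        have : (2:ℝ) < N := by exact_mod_cast hN
        linarith
      rw [div_le_div_iff₀ hρv0' hρu0'] at h7
      nlinarith
    have hF00 : 0 ≤ Fint f s₀ := F_nonneg hH1 hs₀mem.1
    have hiden : Dfun f Bu Bv s₀
        = (Bv.ρ s₀ - Bu.ρ s₀)*(Bv.Y s₀ + 2*Fint f s₀/(Bv.Y s₀)) := by
      rw [Dfun, hY0]
      field_simp
      ring
    have hfac : 0 < Bv.Y s₀ + 2*Fint f s₀/(Bv.Y s₀) := by positivity
    have hD0' : 0 ≤ Dfun f Bu Bv s₀ := by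
      rw [hiden]
      exact mul_nonneg (by linarith) hfac.le
    obtain ⟨hD0, hneg⟩ := sup_zero hN hH1 hH2 Bu Bv hSu hSv hPu hs₀mem hs₀sbar hD0' hDsbar hYgt
    have hxeq : Bu.ρ s₀ = Bv.ρ s₀ := by
      rw [hiden] at hD0
      rcases mul_eq_zero.1 hD0 with h | h
      · linarith
      · linarith
    have := gronwall_zero hN hH1 Bu Bv hSu hSv hs₀mem hs₀sbar hxeq hY0
    linarith
  constructor
  · intro s hs
    have hsu' := hSu hs
    have hsv' := hSv hs
    rw [Bu.derivρ_eq hsu', Bv.derivρ_eq hsv']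
    have h5 := key1 s hs
    have h6 : 1/Bu.Y s < 1/Bv.Y s := one_div_lt_one_div_of_lt (Bv.Ypos hsv') h5
    have e1 : -1/Bu.Y s = -(1/Bu.Y s) := by ring
    have e2 : -1/Bv.Y s = -(1/Bv.Y s) := by ring
    rw [e1, e2]
    linarith
  · have key2 : Dfun f Bu Bv β < 0 := by
      by_contra hcon
      push_neg at hcon
      obtain ⟨hD0, hneg⟩ := sup_zero hN hH1 hH2 Bu Bv hSu hSv hPu hmemβ hβs hcon hDsbar
        (fun s hs => key1 s ⟨hs.1.le, hs.2⟩)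
      exact beta_case hN hH1 Bu Bv hSu hSv hβs key1 hD0 hneg
    have hFβ : Fint f β = 0 := hH1.2.2.2.2.2.2.2.2.2.1
    rw [Dfun, hFβ] at key2
    have hw : Bv.ρ β * Bv.Y β < Bu.ρ β * Bu.Y β := by
      ring_nf at key2
      linarith
    have hsuβ := hSu hmemβ
    have hsvβ := hSv hmemβ
    rw [Bu.J_eq hsuβ, Bv.J_eq hsvβ]
    have e1 : (Bu.ρ β)^2 * (Bu.Y β/Bu.ρ β) = Bu.ρ β * Bu.Y β := by
      have := (Bu.pos β hsuβ).ne'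
      field_simp
    have e2 : (Bv.ρ β)^2 * (Bv.Y β/Bv.ρ β) = Bv.ρ β * Bv.Y β := by
      have := (Bv.pos β hsvβ).ne'
      field_simp
    rw [e1, e2]
    exact hw
end
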